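/- Let v = 2f+1 be an odd prime power, V = GF(v), α a primitive element, β = α², C₀ = ⟨β⟩ the squares, C₁ = αC₀. Develop over (V,+) the initial blocks B₀ = [row F₁: (∞, 1, β, …, β^{f−1}); row F₂: (0, α, αβ, …, αβ^{f−1})] and (if f even) B₁ = [row F₁: (0, 1, β, …, β^{f−1}); row F₂: (∞, α⁻¹, α⁻¹β, …, α⁻¹β^{f−1})], or (if f odd) B₁ = [row F₁: (0, α⁻¹, …, α⁻¹β^{f−1}); row F₂: (∞, 1, β, …, β^{f−1})], with ∞ fixed under addition. Then the resulting two-factor plan on 2v blocks of size f+1 with levels V ∪ {∞} satisfies M₁₂ = J − I. -/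
import Mathlib

open Finset


/-- Level-vs-block incidence: number of runs in block `j` where factor `i` has level `p`. -/
def MB {B R I L : Type*} [Fintype R] [DecidableEq L]
    (plan : B → R → I → L) (i : I) (p : L) (j : B) : ℕ :=
  (Finset.univ.filter fun t : R => plan j t i = p).card

/-- Factor-vs-factor incidence: number of runs where factor `i` is at level `p`
and factor `i'` at level `q`. -/
def Mff {B R I L : Type*} [Fintype B] [Fintype R] [DecidableEq L]
    (plan : B → R → I → L) (i i' : I) (p q : L) : ℕ :=
  (Finset.univ.filter fun r : B × R => plan r.1 r.2 i = p ∧ plan r.1 r.2 i' = q).card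

/-- The two initial blocks `B₀`, `B₁` of Theorem `POTB2new`: `init17 F f α i t fac` is
the level (in `V ∪ {∞}`, with `∞ = none`) of factor `fac` in run `t` of block `Bᵢ`;
`β = α²`, and `B₁` depends on the parity of `f`. -/
def init17 (F : Type*) [Field F] (f : ℕ) (α : Fˣ) (i : Fin 2) (t : Fin (f + 1))
    (fac : Fin 2) : Option F :=
  let β : F := (α : F) ^ 2
  if i = 0 then
    (if fac = 0 then (if t.val = 0 then none else some (β ^ (t.val - 1)))
     else (if t.val = 0 then some 0 else some ((α : F) * β ^ (t.val - 1))))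
  else
    if Even f then
      (if fac = 0 then (if t.val = 0 then some 0 else some (β ^ (t.val - 1)))
       else (if t.val = 0 then none else some ((α : F)⁻¹ * β ^ (t.val - 1))))
    else
      (if fac = 0 then (if t.val = 0 then some 0 else some ((α : F)⁻¹ * β ^ (t.val - 1)))
       else (if t.val = 0 then none else some (β ^ (t.val - 1))))

/-- The plan developed over `(F,+)` (`∞` fixed): `2v` blocks of size `f+1`. -/
def plan17 (F : Type*) [Field F] (f : ℕ) (α : Fˣ) :
    Fin 2 × F → Fin (f + 1) → Fin 2 → Option F :=
  fun blk t fac => (init17 F f α blk.1 t fac).map (· + blk.2)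


section POTB17aux

variable {F : Type*} [Field F] [Fintype F] [DecidableEq F]

/-- constant `cᵢ` such that within block `i`, (level of F₂) − (level of F₁) = `cᵢ·β^k`. -/
def cc17 (F : Type*) [Field F] (f : ℕ) (α : Fˣ) : Fin 2 → F := fun j =>
  if j = 0 then (α : F) - 1 else (if Even f then (α : F)⁻¹ - 1 else 1 - (α : F)⁻¹)

/-- base value: the level of `F₁` in run `k+1` of initial block `j`. -/
def bb17 (F : Type*) [Field F] (f : ℕ) (α : Fˣ) : Fin 2 → ℕ → F := fun j k =>
  if j = 0 then ((α : F) ^ 2) ^ k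
  else (if Even f then ((α : F) ^ 2) ^ k else (α : F)⁻¹ * ((α : F) ^ 2) ^ k)

lemma fin2_17 (j : Fin 2) : j = 0 ∨ j = 1 := by revert j; decide

lemma filter_card_eq_one {α : Type*} [Fintype α] [DecidableEq α] {p : α → Prop}
    [DecidablePred p] (h : ∃! a, p a) : (Finset.univ.filter p).card = 1 := by
  obtain ⟨a, ha, hu⟩ := h
  rw [Finset.card_eq_one]
  refine ⟨a, ?_⟩
  ext b
  simp only [mem_filter, mem_univ, true_and, mem_singleton]
  exact ⟨fun hb => hu b hb, fun hb => hb ▸ ha⟩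

variable {f : ℕ} (hcard : Fintype.card F = 2 * f + 1)
  {α : Fˣ} (hα : ∀ x : Fˣ, x ∈ Subgroup.zpowers α)

section facts
include hcard hα

lemma orderα17 : orderOf α = 2 * f := by
  have h := orderOf_eq_card_of_forall_mem_zpowers hα
  rw [Nat.card_eq_fintype_card, Fintype.card_units, hcard] at h
  omega

lemma fpos17 : 1 ≤ f := by
  have : 1 < Fintype.card F := Fintype.one_lt_card
  omega

lemma αne_one17 : (α : F) ≠ 1 := by
  intro h
  have : α = 1 := Units.ext h
  have h2 := orderα17 hcard hα
  rw [this, orderOf_one] at h2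
  have := fpos17 hcard hα
  omega

lemma αpow_f17 : (α : F) ^ f = -1 := by
  have h2 : ((α : F) ^ f) * ((α : F) ^ f) = 1 := by
    rw [← pow_add]
    have : (α : F) ^ (f + f) = ((α ^ (f + f) : Fˣ) : F) := by
      rw [Units.val_pow_eq_pow_val]
    rw [this]
    have : α ^ (f + f) = 1 := by
      have := pow_orderOf_eq_one α
      rw [orderα17 hcard hα] at this
      rw [show f + f = 2 * f by ring, this]
    rw [this, Units.val_one]
  rcases mul_self_eq_one_iff.mp h2 with h | h
  · exfalso
    have hu : α ^ f = 1 := Units.ext (by rw [Units.val_pow_eq_pow_val, h, Units.val_one])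
    have hd := orderOf_dvd_of_pow_eq_one hu
    rw [orderα17 hcard hα] at hd
    have hf := fpos17 hcard hα
    have := Nat.le_of_dvd (by omega) hd
    omega
  · exact h

omit hcard hα in
lemma cc0_17 : cc17 F f α 0 = (α : F) - 1 := by simp [cc17]

omit hcard hα in
lemma cc1_17 : cc17 F f α 1 = if Even f then (α : F)⁻¹ - 1 else 1 - (α : F)⁻¹ := by
  norm_num [cc17]

lemma cc_eq17 : cc17 F f α 1 =
    ((α ^ (if Even f then f - 1 else 2 * f - 1) : Fˣ) : F) * cc17 F f α 0 := by
  have hα0 : (α : F) ≠ 0 := Units.ne_zero α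
  have hf := fpos17 hcard hα
  have hneg := αpow_f17 hcard hα
  rw [cc0_17, cc1_17, Units.val_pow_eq_pow_val]
  by_cases he : Even f
  · rw [if_pos he, if_pos he]
    have hsplit : (α : F) ^ f = (α : F) ^ (f - 1) * (α : F) := by
      rw [← pow_succ]
      congr 1
      omega
    rw [hsplit] at hneg
    have hinv : (α : F)⁻¹ = -((α : F) ^ (f - 1)) :=
      inv_eq_of_mul_eq_one_right (by linear_combination -hneg)
    rw [hinv]
    linear_combination -hneg
  · rw [if_neg he, if_neg he]
    have hone : (α : F) ^ (2 * f) = 1 := by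
      have := pow_orderOf_eq_one α
      rw [orderα17 hcard hα] at this
      calc (α : F) ^ (2 * f) = ((α ^ (2 * f) : Fˣ) : F) := by rw [Units.val_pow_eq_pow_val]
        _ = 1 := by rw [this, Units.val_one]
    have hsplit : (α : F) ^ (2 * f) = (α : F) ^ (2 * f - 1) * (α : F) := by
      rw [← pow_succ]
      congr 1
      omega
    rw [hone] at hsplit
    have hinv : (α : F)⁻¹ = (α : F) ^ (2 * f - 1) :=
      inv_eq_of_mul_eq_one_right (by linear_combination -hsplit)
    rw [hinv]
    linear_combination hsplit

lemma e_odd17 : ¬ (2 ∣ (if Even f then f - 1 else 2 * f - 1)) := by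
  have hf := fpos17 hcard hα
  by_cases he : Even f
  · simp only [if_pos he]
    obtain ⟨m, hm⟩ := he
    omega
  · simp only [if_neg he]
    omega

lemma cc_ne17 (j : Fin 2) : cc17 F f α j ≠ 0 := by
  have h0 : cc17 F f α 0 ≠ 0 := by
    simp only [cc17, if_pos rfl]
    exact sub_ne_zero.mpr (αne_one17 hcard hα)
  rcases fin2_17 j with rfl | rfl
  · exact h0
  · rw [cc_eq17 hcard hα]
    exact mul_ne_zero (Units.ne_zero _) h0

/-- key lemma: `(j,k) ↦ cⱼ·β^k` is injective, hence bijective onto `F \ {0}`. -/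
lemma key17 (d : F) (hd : d ≠ 0) :
    ∃! w : Fin 2 × Fin f, cc17 F f α w.1 * ((α : F) ^ 2) ^ (w.2 : ℕ) = d := by
  have hα0 : (α : F) ≠ 0 := Units.ne_zero α
  have hf := fpos17 hcard hα
  set e : ℕ := if Even f then f - 1 else 2 * f - 1 with he_def
  -- lifting equations to exponents
  have hexp : ∀ m n : ℕ, (α : F) ^ m = (α : F) ^ n → (2 * f : ℤ) ∣ (m : ℤ) - n := by
    intro m n h
    have hu : α ^ m = α ^ n :=
      Units.ext (by rw [Units.val_pow_eq_pow_val, Units.val_pow_eq_pow_val]; exact h)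
    have hz : α ^ ((m : ℤ) - n) = 1 := by
      simp [zpow_sub, zpow_natCast, hu]
    have := orderOf_dvd_iff_zpow_eq_one.mpr hz
    rwa [orderα17 hcard hα] at this
    
  have hcross : ∀ k k' : ℕ, cc17 F f α 0 * ((α : F) ^ 2) ^ k ≠ cc17 F f α 1 * ((α : F) ^ 2) ^ k' := by
    intro k k' h
    rw [cc_eq17 hcard hα, ← he_def, Units.val_pow_eq_pow_val] at h
    have h0 : cc17 F f α 0 ≠ 0 := cc_ne17 hcard hα 0
    have h2 : (α : F) ^ (2 * k) = (α : F) ^ (e + 2 * k') := by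
      apply mul_left_cancel₀ h0
      rw [pow_mul, pow_add, pow_mul]
      linear_combination h
    obtain ⟨m, hm⟩ := hexp _ _ h2
    have h2d : (2 : ℤ) ∣ (2 * f : ℤ) := ⟨f, by ring⟩
    have : (2 : ℤ) ∣ ((2 * k : ℕ) : ℤ) - ((e + 2 * k' : ℕ) : ℤ) := hm ▸ Dvd.dvd.mul_right h2d m
    have heo : ¬ (2 ∣ e) := e_odd17 hcard hα
    obtain ⟨m', hm'⟩ := this
    have : ¬ ((2:ℕ) ∣ e) := heo
    omega
  have hsame : ∀ k k' : ℕ, k < f → k' < f → ((α : F) ^ 2) ^ k = ((α : F) ^ 2) ^ k' → k = k' := by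
    intro k k' hk hk' h
    rw [← pow_mul, ← pow_mul] at h
    have hd := hexp _ _ h
    by_cases hx : ((2 * k : ℕ) : ℤ) - ((2 * k' : ℕ) : ℤ) = 0
    · omega
    · exfalso
      have h1 : (2 * f : ℤ) ≤ |((2 * k : ℕ) : ℤ) - ((2 * k' : ℕ) : ℤ)| :=
        Int.le_of_dvd (abs_pos.mpr hx) ((dvd_abs _ _).mpr hd)
      have h2 : |((2 * k : ℕ) : ℤ) - ((2 * k' : ℕ) : ℤ)| < 2 * f := by
        rw [abs_lt]
        constructor <;> push_cast <;> omega
      linarith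
  -- the injective map into nonzero elements
  have hne : ∀ w : Fin 2 × Fin f, cc17 F f α w.1 * ((α : F) ^ 2) ^ (w.2 : ℕ) ≠ 0 :=
    fun w => mul_ne_zero (cc_ne17 hcard hα w.1) (pow_ne_zero _ (pow_ne_zero _ hα0))
  let g : Fin 2 × Fin f → {x : F // x ≠ 0} :=
    fun w => ⟨cc17 F f α w.1 * ((α : F) ^ 2) ^ (w.2 : ℕ), hne w⟩
  have hginj : Function.Injective g := by
    rintro ⟨j, k⟩ ⟨j', k'⟩ h
    have h' : cc17 F f α j * ((α : F) ^ 2) ^ (k : ℕ) = cc17 F f α j' * ((α : F) ^ 2) ^ (k' : ℕ) :=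
      congrArg Subtype.val h
    rcases fin2_17 j with rfl | rfl <;> rcases fin2_17 j' with rfl | rfl
    · have := mul_left_cancel₀ (cc_ne17 hcard hα 0) h'
      have := hsame _ _ k.isLt k'.isLt this
      simp [Prod.ext_iff, Fin.ext_iff, this]
    · exact absurd h' (hcross _ _)
    · exact absurd h'.symm (hcross _ _)
    · have := mul_left_cancel₀ (cc_ne17 hcard hα 1) h'
      have := hsame _ _ k.isLt k'.isLt this
      simp [Prod.ext_iff, Fin.ext_iff, this]
  have hcards : Fintype.card (Fin 2 × Fin f) = Fintype.card {x : F // x ≠ 0} := by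
    have : Fintype.card {x : F // x ≠ 0} = Fintype.card F - Fintype.card {x : F // x = 0} :=
      Fintype.card_subtype_compl _
    rw [this, Fintype.card_subtype_eq (0 : F), hcard]
    simp only [Fintype.card_prod, Fintype.card_fin]
    omega
  have hgbij : Function.Bijective g := (Fintype.bijective_iff_injective_and_card g).mpr ⟨hginj, hcards⟩
  obtain ⟨w, hw, hu⟩ := hgbij.existsUnique ⟨d, hd⟩
  refine ⟨w, congrArg Subtype.val hw, fun w' hw' => hu w' (Subtype.ext hw')⟩

omit hcard hα in
/-- the two plan values in a run with `t ≥ 1`. -/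
lemma plan_val17 (i : Fin 2) (x : F) (t : Fin (f + 1)) (ht : 1 ≤ t.val) :
    plan17 F f α (i, x) t 0 = some (bb17 F f α i (t.val - 1) + x) ∧
    plan17 F f α (i, x) t 1 =
      some (bb17 F f α i (t.val - 1) + cc17 F f α i * ((α : F) ^ 2) ^ (t.val - 1) + x) := by
  have ht' : ¬ t.val = 0 := by omega
  rcases fin2_17 i with rfl | rfl <;> by_cases he : Even f <;>
    refine ⟨?_, ?_⟩ <;>
    simp [plan17, init17, bb17, cc17, ht', he] <;>
    ring

omit hcard hα in
/-- Characterization of solutions with finite levels. -/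
lemma sol_char17 (a b : F) (i : Fin 2) (x : F) (t : Fin (f + 1)) :
    (plan17 F f α (i, x) t 0 = some a ∧ plan17 F f α (i, x) t 1 = some b) ↔
      (1 ≤ t.val ∧ bb17 F f α i (t.val - 1) + x = a ∧
        bb17 F f α i (t.val - 1) + cc17 F f α i * ((α : F) ^ 2) ^ (t.val - 1) + x = b) := by
  constructor
  · rintro ⟨h0, h1⟩
    have ht : 1 ≤ t.val := by
      by_contra hcon
      have ht0 : t.val = 0 := by omega
      rcases fin2_17 i with rfl | rfl
      · simp [plan17, init17, ht0] at h0
      · by_cases he : Even f <;> simp [plan17, init17, ht0, he] at h1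
    obtain ⟨p0, p1⟩ := plan_val17 i x t ht
    rw [p0] at h0
    rw [p1] at h1
    exact ⟨ht, by injection h0, by injection h1⟩
  · rintro ⟨ht, h0, h1⟩
    obtain ⟨p0, p1⟩ := plan_val17 i x t ht
    exact ⟨by rw [p0, h0], by rw [p1, h1]⟩

end facts

end POTB17aux

theorem stmt17 (F : Type*) [Field F] [Fintype F] [DecidableEq F] (f : ℕ)
    (hcard : Fintype.card F = 2 * f + 1)
    (α : Fˣ) (hα : ∀ x : Fˣ, x ∈ Subgroup.zpowers α) :
    ∀ p q : Option F, Mff (plan17 F f α) 0 1 p q = if p = q then 0 else 1 := by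
  have hf := fpos17 hcard hα
  intro p q
  unfold Mff
  match p, q with
  | none, none =>
    rw [if_pos rfl, Finset.card_eq_zero, Finset.filter_eq_empty_iff]
    rintro ⟨⟨i, x⟩, t⟩ -
    rintro ⟨h0, h1⟩
    rcases fin2_17 i with rfl | rfl
    · by_cases ht : t.val = 0
      · by_cases he : Even f <;> simp [plan17, init17, ht, he] at h1
      · by_cases he : Even f <;> simp [plan17, init17, ht, he] at h0
    · by_cases ht : t.val = 0
      · by_cases he : Even f <;> simp [plan17, init17, ht, he] at h0
      · by_cases he : Even f <;> simp [plan17, init17, ht, he] at h0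
  | none, some b =>
    rw [if_neg (by simp), filter_card_eq_one]
    refine ⟨((0, b), ⟨0, by omega⟩), ⟨?_, ?_⟩, ?_⟩
    · simp [plan17, init17]
    · simp [plan17, init17]
    · rintro ⟨⟨i, x⟩, t⟩ ⟨h0, h1⟩
      rcases fin2_17 i with rfl | rfl
      · by_cases ht : t.val = 0
        · have hx : x = b := by
            simpa [plan17, init17, ht] using h1
          refine Prod.ext (Prod.ext rfl ?_) (Fin.ext ?_) <;> simp [hx, ht]
        · by_cases he : Even f <;> simp [plan17, init17, ht, he] at h0
      · by_cases ht : t.val = 0 <;>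
          by_cases he : Even f <;> simp [plan17, init17, ht, he] at h0
  | some a, none =>
    rw [if_neg (by simp), filter_card_eq_one]
    refine ⟨((1, a), ⟨0, by omega⟩), ⟨?_, ?_⟩, ?_⟩
    · by_cases he : Even f <;> simp [plan17, init17, he]
    · by_cases he : Even f <;> simp [plan17, init17, he]
    · rintro ⟨⟨i, x⟩, t⟩ ⟨h0, h1⟩
      rcases fin2_17 i with rfl | rfl
      · by_cases ht : t.val = 0 <;>
          by_cases he : Even f <;> simp [plan17, init17, ht, he] at h1
      · by_cases ht : t.val = 0
        · have hx : x = a := by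
            by_cases he : Even f <;> simpa [plan17, init17, ht, he] using h0
          refine Prod.ext (Prod.ext rfl ?_) (Fin.ext ?_) <;> simp [hx, ht]
        · by_cases he : Even f <;> simp [plan17, init17, ht, he] at h1
  | some a, some b =>
    by_cases hab : a = b
    · subst hab
      rw [if_pos rfl, Finset.card_eq_zero, Finset.filter_eq_empty_iff]
      rintro ⟨⟨i, x⟩, t⟩ -
      rintro h
      rw [sol_char17] at h
      obtain ⟨ht, h1, h2⟩ := h
      have hz : cc17 F f α i * ((α : F) ^ 2) ^ (t.val - 1) = 0 := by linear_combination h2 - h1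
      exact mul_ne_zero (cc_ne17 hcard hα i)
        (pow_ne_zero _ (pow_ne_zero _ (Units.ne_zero α))) hz
    · rw [if_neg (by simp [hab]), filter_card_eq_one]
      obtain ⟨⟨j, k⟩, hw, hu⟩ := key17 hcard hα (b - a) (sub_ne_zero.mpr (Ne.symm hab))
      refine ⟨((j, a - bb17 F f α j k), ⟨k + 1, by omega⟩), ?_, ?_⟩
      · refine (sol_char17 a b j (a - bb17 F f α j k) ⟨k + 1, by omega⟩).mpr
          ⟨Nat.le_add_left 1 k, ?_, ?_⟩
        · show bb17 F f α j (k + 1 - 1) + (a - bb17 F f α j k) = a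
          simp only [Nat.add_sub_cancel]
          ring
        · show bb17 F f α j (k + 1 - 1) +
            cc17 F f α j * ((α : F) ^ 2) ^ ((k : ℕ) + 1 - 1) + (a - bb17 F f α j k) = b
          simp only [Nat.add_sub_cancel]
          linear_combination hw
      · rintro ⟨⟨i, x⟩, t⟩ h
        rw [sol_char17] at h
        obtain ⟨ht, h1, h2⟩ := h
        dsimp only at ht h1 h2
        have hk' : t.val - 1 < f := by omega
        have heq := hu (i, ⟨t.val - 1, hk'⟩)
          (by show cc17 F f α i * ((α : F) ^ 2) ^ (t.val - 1) = b - a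
              linear_combination h2 - h1)
        have hij : i = j := congrArg Prod.fst heq
        have hkk : t.val - 1 = (k : ℕ) := by
          have := congrArg (fun w : Fin 2 × Fin f => (w.2 : ℕ)) heq
          simpa using this
        subst hij
        refine Prod.ext (Prod.ext rfl ?_) (Fin.ext ?_)
        · show x = a - bb17 F f α i (k : ℕ)
          rw [← hkk]
          linear_combination h1
        · show t.val = (k : ℕ) + 1
          omega
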